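/- (Proposition 4, MSE form.) In a pair-matching design, if Γ ≥ 1 and for all distinct matched subjects i ≠ j with m(i) = m(j) one has 0 < P_i < 1, 0 < P_j < 1, and 1/Γ ≤ (P_i·(1−P_j))/(P_j·(1−P_i)) ≤ Γ, then the squared bias of the rebar estimator satisfies (E[τ̂_rebar] − τ_ETT)² ≤ MSE_M · 4·(√Γ − 1)/(√Γ + 1). -/

import Mathlib

/-!
With pairs, `w_s = 1/n_T` and `t_s(e, Z) = Σ_{i ∈ s} e_i (2 Z_i - 1)`; since `Z_i ∈ {0, 1}`,
`e_i (2 Z_i - 1) = τ_i Z_i + (y_C(i) - ŷ_C(i)) (2 Z_i - 1)`, so the bias of the rebar estimator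
is `(1/n_T) Σ_i (y_C(i) - ŷ_C(i)) (2 P_i - 1)`. The two subjects of a pair have
`P_i + P_j = 1`, so the sensitivity condition says that the odds `o = P_i/(1 - P_i)` satisfy
`o² ∈ [1/Γ, Γ]`; as `2 P_i - 1 = (o - 1)/(o + 1)` is increasing in `o`, this gives
`|2 P_i - 1| ≤ δ := (√Γ - 1)/(√Γ + 1)`. Cauchy–Schwarz and `n = 2 n_T` then bound the squared
bias by `4 MSE_M δ² ≤ 4 MSE_M δ`.
-/

open MeasureTheory Finset

noncomputable section

namespace Rebar

variable {n : ℕ} {S : Type*} [Fintype S] [DecidableEq S]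

/-- The matched set with label `s`: subjects `i` with `m i = s`. -/
def mSet (m : Fin n → S) (s : S) : Finset (Fin n) :=
  Finset.univ.filter fun i => m i = s

/-- Matched-set difference `t_s(v, z)` for a vector `v` and assignment `z`. -/
def tdiff (m : Fin n → S) (nT nC : S → ℕ) (v z : Fin n → ℝ) (s : S) : ℝ :=
  (1 / (nT s : ℝ)) * ∑ i ∈ mSet m s, v i * z i
    - (1 / (nC s : ℝ)) * ∑ i ∈ mSet m s, v i * (1 - z i)

/-- Total number treated, `n_T = Σ_s n_T(s)`. -/
def nTtot (nT : S → ℕ) : ℕ := ∑ s, nT s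

/-- Matched-set weight `w_s = n_T(s)/n_T`. -/
def w (nT : S → ℕ) (s : S) : ℝ := (nT s : ℝ) / (nTtot nT : ℝ)

/-- The matching estimator `τ̂_M(v) = Σ_s w_s t_s(v, z)`. -/
def tauM (m : Fin n → S) (nT nC : S → ℕ) (v z : Fin n → ℝ) : ℝ :=
  ∑ s, w nT s * tdiff m nT nC v z s

/-- Observed outcome `Y_i = Z_i y_T(i) + (1 - Z_i) y_C(i)`. -/
def Yobs (yT yC : Fin n → ℝ) (z : Fin n → ℝ) (i : Fin n) : ℝ :=
  z i * yT i + (1 - z i) * yC i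

/-- Treatment-assignment probability `P_i = Pr(Z_i = 1)`. -/
def Pr {Ω : Type*} [MeasurableSpace Ω] (μ : Measure Ω) (Z : Ω → Fin n → ℝ)
    (i : Fin n) : ℝ :=
  (μ {ω | Z ω i = 1}).toReal

/-- The estimand: expected effect of treatment on the treated,
`τ_ETT = (Σ_i τ_i P_i)/n_T`. -/
def tauETT {Ω : Type*} [MeasurableSpace Ω] (μ : Measure Ω) (Z : Ω → Fin n → ℝ)
    (yT yC : Fin n → ℝ) (nT : S → ℕ) : ℝ :=
  (∑ i, (yT i - yC i) * Pr μ Z i) / (nTtot nT : ℝ)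

/-- The design constant `C(n, n_T, n_C)`. -/
def Cdesign (n : ℕ) (nT nC : S → ℕ) : ℝ :=
  ((n : ℝ) / (nTtot nT : ℝ) ^ 2) *
    ∑ s, ((nT s : ℝ) + (nC s : ℝ)) * (max 1 ((nT s : ℝ) / (nC s : ℝ))) ^ 2

/-- Mean squared prediction error `MSE_M = (1/n) Σ_i (ŷ_C(i) - y_C(i))²`. -/
def MSE (yC yhat : Fin n → ℝ) : ℝ :=
  (1 / (n : ℝ)) * ∑ i, (yhat i - yC i) ^ 2

end Rebar


namespace Rebar

variable {n : ℕ} {S : Type*} [DecidableEq S]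

section Assignment

variable {Ω : Type*} [MeasurableSpace Ω] {μ : Measure Ω} {Z : Ω → Fin n → ℝ} {i : Fin n}

omit [MeasurableSpace Ω] in
lemma eq_indicator_of_zero_or_one (h01 : ∀ ω, Z ω i = 0 ∨ Z ω i = 1) :
    (fun ω => Z ω i) = {ω | Z ω i = 1}.indicator 1 := by
  funext ω
  rcases h01 ω with h | h <;> simp [Set.indicator, h]

lemma integrable_of_zero_or_one [IsFiniteMeasure μ] (hZ : Measurable fun ω => Z ω i)
    (h01 : ∀ ω, Z ω i = 0 ∨ Z ω i = 1) : Integrable (fun ω => Z ω i) μ := by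
  rw [eq_indicator_of_zero_or_one h01]
  exact (integrable_const 1).indicator (hZ (measurableSet_singleton 1))

lemma integral_eq_Pr (hZ : Measurable fun ω => Z ω i) (h01 : ∀ ω, Z ω i = 0 ∨ Z ω i = 1) :
    ∫ ω, Z ω i ∂μ = Pr μ Z i := by
  rw [eq_indicator_of_zero_or_one h01,
    integral_indicator_one (s := {ω | Z ω i = 1}) (hZ (measurableSet_singleton 1)),
    measureReal_def, Pr]

lemma integrable_mul_add_of_zero_or_one [IsFiniteMeasure μ] (hZ : Measurable fun ω => Z ω i)
    (h01 : ∀ ω, Z ω i = 0 ∨ Z ω i = 1) (a b : ℝ) : Integrable (fun ω => a * Z ω i + b) μ :=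
  ((integrable_of_zero_or_one hZ h01).const_mul a).add (integrable_const b)

lemma integral_mul_add_eq_Pr [IsProbabilityMeasure μ] (hZ : Measurable fun ω => Z ω i)
    (h01 : ∀ ω, Z ω i = 0 ∨ Z ω i = 1) (a b : ℝ) :
    ∫ ω, (a * Z ω i + b) ∂μ = a * Pr μ Z i + b := by
  rw [integral_add ((integrable_of_zero_or_one hZ h01).const_mul a) (integrable_const b),
    integral_const_mul, integral_eq_Pr hZ h01, integral_const, probReal_univ, one_smul]

lemma sum_Pr_mSet [IsProbabilityMeasure μ] {m : Fin n → S} {nT : S → ℕ}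
    (hZ : ∀ i, Measurable fun ω => Z ω i) (h01 : ∀ ω i, Z ω i = 0 ∨ Z ω i = 1)
    (hZsum : ∀ᵐ ω ∂μ, ∀ s, ∑ i ∈ mSet m s, Z ω i = (nT s : ℝ)) (s : S) :
    ∑ i ∈ mSet m s, Pr μ Z i = nT s := by
  have h := integral_congr_ae (hZsum.mono fun ω h => h s)
  rw [integral_const, probReal_univ, one_smul,
    integral_finsetSum _ fun i _ => integrable_of_zero_or_one (hZ i) (h01 · i)] at h
  rw [← h]
  exact Finset.sum_congr rfl fun i _ => (integral_eq_Pr (hZ i) (h01 · i)).symm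

end Assignment

lemma card_eq_nTtot_add_nTtot [Fintype S] {m : Fin n → S} {nT nC : S → ℕ}
    (hsize : ∀ s, nT s + nC s = (mSet m s).card) : n = nTtot nT + nTtot nC := by
  rw [nTtot, nTtot, ← Finset.sum_add_distrib, Finset.sum_congr rfl fun s _ => hsize s]
  simpa [mSet] using Finset.card_eq_sum_card_fiberwise (f := m) (s := Finset.univ)
    (t := Finset.univ) fun i _ => Finset.mem_univ (m i)

lemma Yobs_sub_mul_two_mul_sub_one {yT yC yhat z : Fin n → ℝ} {i : Fin n}
    (hz : z i = 0 ∨ z i = 1) :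
    (Yobs yT yC z i - yhat i) * (2 * z i - 1)
      = (yT i - yC i + 2 * (yC i - yhat i)) * z i + (yhat i - yC i) := by
  rcases hz with h | h <;> simp only [Yobs, h] <;> ring

section Pair

variable {m : Fin n → S} {nT nC : S → ℕ} (hpair : ∀ s, nT s = 1 ∧ nC s = 1)
include hpair

lemma card_mSet_of_pair (hsize : ∀ s, nT s + nC s = (mSet m s).card) (s : S) :
    (mSet m s).card = 2 := by
  rw [← hsize, (hpair s).1, (hpair s).2]

lemma card_eq_two_mul_nTtot_of_pair [Fintype S]
    (hsize : ∀ s, nT s + nC s = (mSet m s).card) : n = 2 * nTtot nT := by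
  have hTC : nTtot nC = nTtot nT :=
    Finset.sum_congr rfl fun s _ => by rw [(hpair s).1, (hpair s).2]
  rw [card_eq_nTtot_add_nTtot hsize, hTC, two_mul]

lemma exists_partner_of_pair (hsize : ∀ s, nT s + nC s = (mSet m s).card) (i : Fin n) :
    ∃ j, j ≠ i ∧ m j = m i := by
  obtain ⟨j, hj, hji⟩ :=
    Finset.exists_mem_ne (by rw [card_mSet_of_pair hpair hsize (m i)]; norm_num) i
  exact ⟨j, hji, (Finset.mem_filter.mp hj).2⟩

lemma mSet_eq_pair (hsize : ∀ s, nT s + nC s = (mSet m s).card) {i j : Fin n} (hij : i ≠ j)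
    (hm : m i = m j) : mSet m (m i) = {i, j} := by
  refine (Finset.eq_of_subset_of_card_le ?_ ?_).symm
  · intro k hk
    rcases Finset.mem_insert.mp hk with rfl | hk
    · simp [mSet]
    · simp [mSet, Finset.mem_singleton.mp hk, hm]
  · rw [card_mSet_of_pair hpair hsize, Finset.card_pair hij]

lemma Pr_add_Pr_of_pair {Ω : Type*} [MeasurableSpace Ω] {μ : Measure Ω} [IsProbabilityMeasure μ]
    {Z : Ω → Fin n → ℝ} (hsize : ∀ s, nT s + nC s = (mSet m s).card)
    (hZ : ∀ i, Measurable fun ω => Z ω i) (h01 : ∀ ω i, Z ω i = 0 ∨ Z ω i = 1)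
    (hZsum : ∀ᵐ ω ∂μ, ∀ s, ∑ i ∈ mSet m s, Z ω i = (nT s : ℝ)) {i j : Fin n} (hij : i ≠ j)
    (hm : m i = m j) : Pr μ Z i + Pr μ Z j = 1 := by
  have h := sum_Pr_mSet hZ h01 hZsum (m i)
  rwa [mSet_eq_pair hpair hsize hij hm, Finset.sum_pair hij, (hpair _).1, Nat.cast_one] at h

lemma tdiff_of_pair (v z : Fin n → ℝ) (s : S) :
    tdiff m nT nC v z s = ∑ i ∈ mSet m s, v i * (2 * z i - 1) := by
  simp only [tdiff, (hpair s).1, (hpair s).2, Nat.cast_one, div_one, one_mul,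
    ← Finset.sum_sub_distrib]
  exact Finset.sum_congr rfl fun i _ => by ring

lemma tauM_of_pair [Fintype S] (v z : Fin n → ℝ) :
    tauM m nT nC v z = (∑ i, v i * (2 * z i - 1)) / nTtot nT := by
  rw [← Finset.sum_fiberwise Finset.univ m, Finset.sum_div]
  simp only [tauM, w, tdiff_of_pair hpair, (hpair _).1, Nat.cast_one, one_div_mul_eq_div]
  rfl

lemma integral_rebar_sub_tauETT_of_pair [Fintype S] {Ω : Type*} [MeasurableSpace Ω]
    {μ : Measure Ω} [IsProbabilityMeasure μ] {Z : Ω → Fin n → ℝ}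
    (hZ : ∀ i, Measurable fun ω => Z ω i) (h01 : ∀ ω i, Z ω i = 0 ∨ Z ω i = 1)
    (yT yC yhat : Fin n → ℝ) :
    (∫ ω, tauM m nT nC (fun i => Yobs yT yC (Z ω) i - yhat i) (Z ω) ∂μ)
        - tauETT μ Z yT yC nT
      = (∑ i, (yC i - yhat i) * (2 * Pr μ Z i - 1)) / nTtot nT := by
  simp_rw [tauM_of_pair hpair, Yobs_sub_mul_two_mul_sub_one (h01 _ _)]
  rw [integral_div,
    integral_finsetSum _ fun i _ => integrable_mul_add_of_zero_or_one (hZ i) (h01 · i) _ _]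
  simp_rw [integral_mul_add_eq_Pr (hZ _) (h01 · _), tauETT, ← sub_div, ← Finset.sum_sub_distrib]
  congr 1
  exact Finset.sum_congr rfl fun i _ => by ring

end Pair

lemma abs_two_mul_sub_one_le_of_odds {p Γ : ℝ} (hΓ : 0 < Γ) (hp0 : 0 < p) (hp1 : p < 1)
    (hlo : 1 / Γ ≤ p * p / ((1 - p) * (1 - p))) (hhi : p * p / ((1 - p) * (1 - p)) ≤ Γ) :
    |2 * p - 1| ≤ (√Γ - 1) / (√Γ + 1) := by
  have hq : 0 < 1 - p := by linarith
  have hg : 0 < √Γ := Real.sqrt_pos.mpr hΓ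
  have hupper : p ≤ √Γ * (1 - p) := by
    refine (pow_le_pow_iff_left₀ hp0.le (by positivity) two_ne_zero).mp ?_
    rw [mul_pow, Real.sq_sqrt hΓ.le, sq, sq]
    rwa [div_le_iff₀ (by positivity)] at hhi
  have hlower : 1 - p ≤ √Γ * p := by
    refine (pow_le_pow_iff_left₀ hq.le (by positivity) two_ne_zero).mp ?_
    rw [mul_pow, Real.sq_sqrt hΓ.le, sq, sq]
    rw [div_le_div_iff₀ hΓ (by positivity)] at hlo
    linarith
  rw [abs_le, neg_div', div_le_iff₀ (by positivity), le_div_iff₀ (by positivity)]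
  constructor <;> linarith

lemma MSE_nonneg (yC yhat : Fin n → ℝ) : 0 ≤ MSE yC yhat := by
  unfold MSE
  positivity

lemma natCast_mul_MSE (yC yhat : Fin n → ℝ) :
    (n : ℝ) * MSE yC yhat = ∑ i, (yC i - yhat i) ^ 2 := by
  rcases Nat.eq_zero_or_pos n with rfl | hn
  · simp
  · rw [MSE, ← mul_assoc, mul_one_div_cancel (by positivity), one_mul]
    exact Finset.sum_congr rfl fun i _ => by ring

lemma sq_sum_mul_le_MSE {yC yhat d : Fin n → ℝ} {δ : ℝ} (hd : ∀ i, |d i| ≤ δ) :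
    (∑ i, (yC i - yhat i) * d i) ^ 2 ≤ n ^ 2 * MSE yC yhat * δ ^ 2 := by
  have hd2 : ∑ i, d i ^ 2 ≤ n * δ ^ 2 := by
    calc ∑ i, d i ^ 2 ≤ ∑ _i : Fin n, δ ^ 2 :=
          Finset.sum_le_sum fun i _ => sq_le_sq' (abs_le.mp (hd i)).1 (abs_le.mp (hd i)).2
      _ = n * δ ^ 2 := by simp
  calc (∑ i, (yC i - yhat i) * d i) ^ 2
      ≤ (∑ i, (yC i - yhat i) ^ 2) * ∑ i, d i ^ 2 := Finset.sum_mul_sq_le_sq_mul_sq _ _ _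
    _ ≤ (∑ i, (yC i - yhat i) ^ 2) * (n * δ ^ 2) :=
        mul_le_mul_of_nonneg_left hd2 (Finset.sum_nonneg fun i _ => sq_nonneg _)
    _ = n ^ 2 * MSE yC yhat * δ ^ 2 := by rw [← natCast_mul_MSE]; ring

end Rebar

open Rebar in
theorem stmt18_general {n : ℕ} {S : Type*} [Fintype S] [DecidableEq S]
    (m : Fin n → S) (nT nC : S → ℕ)
    (hsize : ∀ s, nT s + nC s = (Rebar.mSet m s).card)
    {Ω : Type*} [MeasurableSpace Ω] (μ : Measure Ω) [IsProbabilityMeasure μ]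
    (Z : Ω → Fin n → ℝ)
    (hZmeas : ∀ i, Measurable fun ω => Z ω i)
    (hZ01 : ∀ ω i, Z ω i = 0 ∨ Z ω i = 1)
    (hZsum : ∀ᵐ ω ∂μ, ∀ s, ∑ i ∈ Rebar.mSet m s, Z ω i = (nT s : ℝ))
    (hpair : ∀ s, nT s = 1 ∧ nC s = 1)
    (Γ : ℝ) (hΓ : 1 ≤ Γ)
    (hsens : ∀ i j : Fin n, i ≠ j → m i = m j →
      0 < Rebar.Pr μ Z i ∧ Rebar.Pr μ Z i < 1 ∧
      0 < Rebar.Pr μ Z j ∧ Rebar.Pr μ Z j < 1 ∧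
      1 / Γ ≤ (Rebar.Pr μ Z i * (1 - Rebar.Pr μ Z j))
                / (Rebar.Pr μ Z j * (1 - Rebar.Pr μ Z i)) ∧
      (Rebar.Pr μ Z i * (1 - Rebar.Pr μ Z j))
                / (Rebar.Pr μ Z j * (1 - Rebar.Pr μ Z i)) ≤ Γ)
    (yT yC yhat : Fin n → ℝ) :
    ((∫ ω, Rebar.tauM m nT nC
          (fun i => Rebar.Yobs yT yC (Z ω) i - yhat i) (Z ω) ∂μ)
        - Rebar.tauETT μ Z yT yC nT) ^ 2
      ≤ Rebar.MSE yC yhat *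
          (4 * (Real.sqrt Γ - 1) / (Real.sqrt Γ + 1)) := by
  set δ := (√Γ - 1) / (√Γ + 1)
  have hg : 1 ≤ √Γ := Real.one_le_sqrt.mpr hΓ
  have hδ0 : 0 ≤ δ := div_nonneg (by linarith) (by linarith)
  have hδ1 : δ ≤ 1 := (div_le_one (by linarith)).mpr (by linarith)
  have hd : ∀ i, |2 * Pr μ Z i - 1| ≤ δ := by
    intro i
    obtain ⟨j, hji, hm⟩ := exists_partner_of_pair hpair hsize i
    have hPj : Pr μ Z j = 1 - Pr μ Z i :=
      eq_sub_of_add_eq' (Pr_add_Pr_of_pair hpair hsize hZmeas hZ01 hZsum hji.symm hm.symm)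
    obtain ⟨hp0, hp1, -, -, hlo, hhi⟩ := hsens i j hji.symm hm.symm
    rw [hPj, sub_sub_cancel] at hlo hhi
    exact abs_two_mul_sub_one_le_of_odds (by linarith) hp0 hp1 hlo hhi
  have hn : (n : ℝ) = 2 * nTtot nT := by
    exact_mod_cast card_eq_two_mul_nTtot_of_pair hpair hsize
  have hM : 0 ≤ 4 * MSE yC yhat := mul_nonneg zero_le_four (MSE_nonneg yC yhat)
  rw [integral_rebar_sub_tauETT_of_pair hpair hZmeas hZ01, div_pow]
  calc _ ≤ 4 * MSE yC yhat * δ ^ 2 := by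
        refine div_le_of_le_mul₀ (sq_nonneg _) (mul_nonneg hM (sq_nonneg δ)) ?_
        exact (sq_sum_mul_le_MSE hd).trans_eq (by rw [hn]; ring)
    _ ≤ 4 * MSE yC yhat * δ := mul_le_mul_of_nonneg_left (pow_le_of_le_one hδ0 hδ1 two_ne_zero) hM
    _ = MSE yC yhat * (4 * (√Γ - 1) / (√Γ + 1)) := by rw [mul_div_assoc]; ring

/-- Proposition 4, MSE form: in a pair-matching design under the
odds-ratio sensitivity condition at level Γ,
`(E[τ̂_rebar] - τ_ETT)² ≤ MSE_M · 4(√Γ - 1)/(√Γ + 1)`. -/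
theorem stmt18 {n : ℕ} {S : Type*} [Fintype S] [DecidableEq S] [Nonempty S]
    (m : Fin n → S) (nT nC : S → ℕ)
    (hT : ∀ s, 0 < nT s) (hC : ∀ s, 0 < nC s)
    (hsize : ∀ s, nT s + nC s = (Rebar.mSet m s).card)
    {Ω : Type*} [MeasurableSpace Ω] (μ : Measure Ω) [IsProbabilityMeasure μ]
    (Z : Ω → Fin n → ℝ)
    (hZmeas : ∀ i, Measurable fun ω => Z ω i)
    (hZ01 : ∀ ω i, Z ω i = 0 ∨ Z ω i = 1)
    (hZsum : ∀ᵐ ω ∂μ, ∀ s, ∑ i ∈ Rebar.mSet m s, Z ω i = (nT s : ℝ))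
    (hpair : ∀ s, nT s = 1 ∧ nC s = 1)
    (Γ : ℝ) (hΓ : 1 ≤ Γ)
    (hsens : ∀ i j : Fin n, i ≠ j → m i = m j →
      0 < Rebar.Pr μ Z i ∧ Rebar.Pr μ Z i < 1 ∧
      0 < Rebar.Pr μ Z j ∧ Rebar.Pr μ Z j < 1 ∧
      1 / Γ ≤ (Rebar.Pr μ Z i * (1 - Rebar.Pr μ Z j))
                / (Rebar.Pr μ Z j * (1 - Rebar.Pr μ Z i)) ∧
      (Rebar.Pr μ Z i * (1 - Rebar.Pr μ Z j))
                / (Rebar.Pr μ Z j * (1 - Rebar.Pr μ Z i)) ≤ Γ)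
    (yT yC yhat : Fin n → ℝ) :
    ((∫ ω, Rebar.tauM m nT nC
          (fun i => Rebar.Yobs yT yC (Z ω) i - yhat i) (Z ω) ∂μ)
        - Rebar.tauETT μ Z yT yC nT) ^ 2
      ≤ Rebar.MSE yC yhat *
          (4 * (Real.sqrt Γ - 1) / (Real.sqrt Γ + 1)) :=
  stmt18_general m nT nC hsize μ Z hZmeas hZ01 hZsum hpair Γ hΓ hsens yT yC yhat
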